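/- Let A be a finite alphabet and let v be a word over A that is fully arched with k arches, i.e. v = s₁·s₂···s_k where each s_i is an A-arch. Then for all words u, t over A, r(v·u, t) = k + r(u, t) and ℓ(t, u·vᴿ) = k + ℓ(t, u), where vᴿ denotes the reversal of v and the equalities are in ℕ ∪ {∞} with k + ∞ = ∞. -/

import Mathlib

variable {A : Type*}

/-- Simon's congruence of order `k`: `u` and `v` have the same subwords of length ≤ k. -/
def SimonCong (k : ℕ) (u v : List A) : Prop :=
  ∀ s : List A, s.length ≤ k → (s.Sublist u ↔ s.Sublist v)

/-- Subword distance `δ(u,v) = sup {k | u ∼ₖ v} ∈ ℕ∞`. -/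
noncomputable def sdelta (u v : List A) : ℕ∞ :=
  sSup {d : ℕ∞ | ∃ k : ℕ, d = k ∧ SimonCong k u v}

/-- Right side distance `r(u,t) = δ(u, u·t)`. -/
noncomputable def rdist (u t : List A) : ℕ∞ := sdelta u (u ++ t)

/-- Left side distance `ℓ(t,u) = δ(t·u, u)`. -/
noncomputable def ldist (t u : List A) : ℕ∞ := sdelta (t ++ u) u

/-- Piecewise complexity `h(u)`: least `n` such that any `v` with `u ∼ₙ v` equals `u`. -/
noncomputable def pcHeight (u : List A) : ℕ :=
  sInf {n : ℕ | ∀ v : List A, SimonCong n u v → v = u}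

/-- `u` is `m`-reduced: no strict subword of `u` is `∼ₘ`-equivalent to `u`. -/
def Reduced (m : ℕ) (u : List A) : Prop :=
  ∀ u' : List A, u'.Sublist u → u' ≠ u → ¬ SimonCong m u u'

/-- Piecewise minimality index `ρ(u)`: least `m` such that `u` is `m`-reduced. -/
noncomputable def pcRho (u : List A) : ℕ := sInf {m : ℕ | Reduced m u}

/-- An `A`-arch: contains every letter of `A` but no strict prefix does. -/
def IsArch (A : Type*) [Fintype A] (s : List A) : Prop :=
  (∀ a : A, a ∈ s) ∧ ∀ t : List A, t <+: s → t ≠ s → ∃ a : A, a ∉ t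

/-- The infinite periodic word `u^ω`. -/
def omegaWord (u : List A) (hu : u ≠ []) (i : ℕ) : A :=
  u.get ⟨i % u.length, Nat.mod_lt i (List.length_pos_iff.mpr hu)⟩

/-- The arch-jumping function `α` on `u^ω`: `α(i)` is the least `j > i` such that
every letter of `A` occurs among positions `i, …, j-1` of `u^ω`. -/
noncomputable def archJump (u : List A) (hu : u ≠ []) (i : ℕ) : ℕ :=
  sInf {j : ℕ | i < j ∧ ∀ a : A, ∃ m : ℕ, i ≤ m ∧ m < j ∧ omegaWord u hu m = a}

/-- `p` is an arch-period of `u` starting at `i`. -/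
def IsArchPeriodAt (u : List A) (hu : u ≠ []) (i p : ℕ) : Prop :=
  0 < p ∧ ∃ k : ℕ, (archJump u hu)^[k + p] i ≡ (archJump u hu)^[k] i [MOD u.length]

/-- The arch-period of `u`: the least arch-period starting at 0. -/
noncomputable def archPeriod (u : List A) (hu : u ≠ []) : ℕ :=
  sInf {p : ℕ | IsArchPeriodAt u hu 0 p}

/-- `K_u`: the least `k` with `α^{k+p}(0) ≡ α^k(0) (mod L)`. -/
noncomputable def archTransientIndex (u : List A) (hu : u ≠ []) : ℕ :=
  sInf {k : ℕ |
    (archJump u hu)^[k + archPeriod u hu] 0 ≡ (archJump u hu)^[k] 0 [MOD u.length]}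

/-- The transient `T_u = α^{K_u}(0)`. -/
noncomputable def archTransient (u : List A) (hu : u ≠ []) : ℕ :=
  (archJump u hu)^[archTransientIndex u hu] 0

/-- The span `Δ_u = α^{K_u+p_u}(0) − α^{K_u}(0)`. -/
noncomputable def archSpan (u : List A) (hu : u ≠ []) : ℕ :=
  (archJump u hu)^[archTransientIndex u hu + archPeriod u hu] 0 - archTransient u hu

/-- `u^n`: the `n`-fold concatenation of `u`. -/
def listPow (u : List A) (n : ℕ) : List A := (List.replicate n u).flatten

/-!
Write `v = s₁ ⋯ s_k` with every `sᵢ` an `A`-arch. Every word of length at most `k` embeds into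
`v`, one letter per arch. Conversely, let `c` be the word of the last letters of the arches: the
last letter of an arch does not occur earlier in it, so any embedding of `c` into `v·w` must
consume all of `v`, and `c·x ≼ v·w` forces `x ≼ w`. Together these give `v·w ∼_{k+m} v·w'` iff
`w ∼_m w'`, that is `δ(v·w, v·w') = k + δ(w, w')`. Both identities are instances of this, the
second one after reversing all words, which preserves `δ`.
-/

open scoped List

theorem SimonCong.mono {k j : ℕ} {u v : List A} (h : SimonCong k u v) (hjk : j ≤ k) :
    SimonCong j u v :=
  fun s hs => h s (hs.trans hjk)

theorem SimonCong.symm {k : ℕ} {u v : List A} (h : SimonCong k u v) : SimonCong k v u :=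
  fun s hs => (h s hs).symm

theorem simonCong_zero (u v : List A) : SimonCong 0 u v := by
  intro s hs
  rw [List.length_eq_zero_iff.mp (Nat.le_zero.mp hs)]
  simp

theorem SimonCong.reverse {k : ℕ} {u v : List A} (h : SimonCong k u v) :
    SimonCong k u.reverse v.reverse :=
  fun s hs => by simpa only [List.sublist_reverse_iff] using h s.reverse (by simpa using hs)

theorem simonCong_reverse_iff {k : ℕ} {u v : List A} :
    SimonCong k u.reverse v.reverse ↔ SimonCong k u v :=
  ⟨fun h => by simpa using h.reverse, SimonCong.reverse⟩

theorem natCast_le_sdelta_iff {n : ℕ} {u v : List A} :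
    (n : ℕ∞) ≤ sdelta u v ↔ SimonCong n u v := by
  refine ⟨fun hn => ?_, fun h => le_sSup ⟨n, rfl, h⟩⟩
  by_contra h
  have hpos : 0 < n := Nat.pos_of_ne_zero fun h0 => h (h0 ▸ simonCong_zero u v)
  have hle : sdelta u v ≤ (n - 1 : ℕ) := sSup_le fun d ⟨m, hd, hm⟩ => by
    subst hd
    exact_mod_cast Nat.le_sub_one_of_lt (lt_of_not_ge fun hnm => h (hm.mono hnm))
  have := hn.trans hle
  norm_cast at this
  omega

theorem sdelta_reverse (u v : List A) : sdelta u.reverse v.reverse = sdelta u v :=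
  ENat.eq_of_forall_natCast_le_iff fun _ => by
    rw [natCast_le_sdelta_iff, natCast_le_sdelta_iff, simonCong_reverse_iff]

theorem sublist_flatten_of_length_le {ss : List (List A)} (hss : ∀ s ∈ ss, ∀ a : A, a ∈ s)
    {y : List A} (hy : y.length ≤ ss.length) : y <+ ss.flatten := by
  induction ss generalizing y with
  | nil => simp_all
  | cons s ss ih =>
    cases y with
    | nil => exact List.nil_sublist _
    | cons a y =>
      rw [List.flatten_cons, ← List.singleton_append]
      exact (List.singleton_sublist.mpr (hss s (by simp) a)).append
        (ih (fun s hs => hss s (by simp [hs])) (by simpa using hy))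

theorem sublist_of_cons_sublist_append_cons {a : A} {p x w : List A} (ha : a ∉ p)
    (h : a :: x <+ p ++ a :: w) : x <+ w := by
  obtain ⟨l₁, l₂, hx, h₁, h₂⟩ := List.sublist_append_iff.mp h
  cases l₁ with
  | nil =>
    rw [List.nil_append] at hx
    exact List.cons_sublist_cons.mp (hx ▸ h₂)
  | cons b l =>
    obtain ⟨rfl, -⟩ := List.cons_eq_cons.mp hx
    exact absurd (h₁.subset List.mem_cons_self) ha

theorem IsArch.exists_eq_append_singleton [Fintype A] [Nonempty A] {s : List A}
    (hs : IsArch A s) : ∃ p a, s = p ++ [a] ∧ a ∉ p := by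
  have hne : s ≠ [] := List.ne_nil_of_mem (hs.1 (Classical.arbitrary A))
  have hsplit := List.dropLast_append_getLast hne
  refine ⟨s.dropLast, s.getLast hne, hsplit.symm, fun hlast => ?_⟩
  obtain ⟨b, hb⟩ := hs.2 s.dropLast ⟨_, hsplit⟩ fun h => by
    have := congrArg List.length h
    have := List.length_pos_iff.mpr hne
    simp only [List.length_dropLast] at *
    omega
  have hbs := hs.1 b
  rw [← hsplit, List.mem_append, List.mem_singleton] at hbs
  rcases hbs with hb' | rfl
  exacts [hb hb', hb hlast]

theorem exists_sublist_flatten_forall_append_sublist [Fintype A] [Nonempty A]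
    {ss : List (List A)} (harch : ∀ s ∈ ss, IsArch A s) :
    ∃ c : List A, c.length = ss.length ∧ c <+ ss.flatten ∧
      ∀ x w : List A, c ++ x <+ ss.flatten ++ w → x <+ w := by
  induction ss with
  | nil => exact ⟨[], rfl, List.nil_sublist _, fun x w h => by simpa using h⟩
  | cons s ss ih =>
    obtain ⟨c, hlen, hsub, hcancel⟩ := ih fun s hs => harch s (by simp [hs])
    obtain ⟨p, a, rfl, ha⟩ := (harch s (by simp)).exists_eq_append_singleton
    refine ⟨a :: c, by simp [hlen], ?_, fun x w h => hcancel x w ?_⟩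
    · simpa using (List.sublist_append_right p [a]).append hsub
    · exact sublist_of_cons_sublist_append_cons ha (by simpa using h)

theorem SimonCong.sublist_of_flatten_append [Fintype A] {ss : List (List A)}
    (harch : ∀ s ∈ ss, IsArch A s) {m : ℕ} {w w' : List A}
    (h : SimonCong (ss.length + m) (ss.flatten ++ w) (ss.flatten ++ w'))
    {x : List A} (hx : x.length ≤ m) (hxw : x <+ w) : x <+ w' := by
  cases x with
  | nil => exact List.nil_sublist _
  | cons a _ =>
    have : Nonempty A := ⟨a⟩
    obtain ⟨c, hlen, hsub, hcancel⟩ := exists_sublist_flatten_forall_append_sublist harch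
    exact hcancel _ w' ((h _ (by simp only [List.length_append, hlen]; omega)).mp
      (hsub.append hxw))

theorem SimonCong.flatten_append_sublist {ss : List (List A)} (hss : ∀ s ∈ ss, ∀ a : A, a ∈ s)
    {m : ℕ} {w w' : List A} (h : SimonCong m w w') {x : List A}
    (hx : x.length ≤ ss.length + m) (hxw : x <+ ss.flatten ++ w) : x <+ ss.flatten ++ w' := by
  obtain ⟨x₁, x₂, rfl, h₁, h₂⟩ := List.sublist_append_iff.mp hxw
  by_cases hx₂ : x₂.length ≤ m
  · exact h₁.append ((h x₂ hx₂).mp h₂)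
  -- Now `x₁` is shorter than `ss`, so the arches also absorb the first letters of `x₂`.
  rw [List.length_append] at hx
  rw [← List.take_append_drop (ss.length - x₁.length) x₂, ← List.append_assoc]
  refine (sublist_flatten_of_length_le hss ?_).append
    ((h _ ?_).mp ((List.drop_sublist _ _).trans h₂))
  · simp only [List.length_append, List.length_take]
    omega
  · simp only [List.length_drop]
    omega

theorem simonCong_flatten_append_iff [Fintype A] {ss : List (List A)}
    (harch : ∀ s ∈ ss, IsArch A s) {m : ℕ} {w w' : List A} :
    SimonCong (ss.length + m) (ss.flatten ++ w) (ss.flatten ++ w') ↔ SimonCong m w w' := by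
  have hss : ∀ s ∈ ss, ∀ a : A, a ∈ s := fun s hs => (harch s hs).1
  exact ⟨fun h x hx => ⟨h.sublist_of_flatten_append harch hx,
      h.symm.sublist_of_flatten_append harch hx⟩,
    fun h x hx => ⟨h.flatten_append_sublist hss hx, h.symm.flatten_append_sublist hss hx⟩⟩

theorem sdelta_flatten_append [Fintype A] {ss : List (List A)} (harch : ∀ s ∈ ss, IsArch A s)
    (w w' : List A) :
    sdelta (ss.flatten ++ w) (ss.flatten ++ w') = ss.length + sdelta w w' := by
  refine ENat.eq_of_forall_natCast_le_iff fun n => ?_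
  rw [natCast_le_sdelta_iff]
  rcases le_or_gt n ss.length with hn | hn
  · have hcong : SimonCong n (ss.flatten ++ w) (ss.flatten ++ w') :=
      ((simonCong_flatten_append_iff harch (m := 0)).mpr (simonCong_zero w w')).mono hn
    simp only [hcong, true_iff]
    exact (Nat.cast_le.mpr hn).trans le_self_add
  · obtain ⟨m, rfl⟩ := Nat.exists_eq_add_of_le hn.le
    rw [simonCong_flatten_append_iff harch, ← natCast_le_sdelta_iff, Nat.cast_add,
      ENat.add_le_add_iff_left (ENat.natCast_ne_top _)]

/-- prepending a fully arched word with `k` arches shifts `r` by `k`,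
and symmetrically for `ℓ` with the reversal. -/
theorem stmt15 {A : Type*} [Fintype A] (v : List A) (k : ℕ) (ss : List (List A))
    (hlen : ss.length = k) (harch : ∀ s ∈ ss, IsArch A s) (hv : v = ss.flatten)
    (u t : List A) :
    rdist (v ++ u) t = (k : ℕ∞) + rdist u t ∧
    ldist t (u ++ v.reverse) = (k : ℕ∞) + ldist t u := by
  subst hv hlen
  constructor
  · rw [rdist, rdist, List.append_assoc, sdelta_flatten_append harch]
  · rw [ldist, ldist, ← sdelta_reverse, ← sdelta_reverse (t ++ u)]
    simpa using sdelta_flatten_append harch (u.reverse ++ t.reverse) u.reverse
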